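/- Let a, b, ℓ > 0 and let i(ω) denote the normalized width of the discrete bounding rectangle of the random segment S_ω of length ℓ. Define f(z) = z·arccos(z) − √(1−z²) + 1 for 0 ≤ z ≤ 1. Then for every n ∈ ℕ, n ≥ 1: P[i ≥ n] = 1 if n = 1; P[i ≥ n] = (2ℓ/(π·a))·( f(a·(n−1)/ℓ) − f(a·(n−2)/ℓ) ) if 2 ≤ n < ℓ/a + 1; P[i ≥ n] = (2ℓ/(π·a))·( 1 − f(a·(n−2)/ℓ) ) if ℓ/a + 1 ≤ n < ℓ/a + 2; and P[i ≥ n] = 0 if n ≥ ℓ/a + 2. -/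

import Mathlib

open Set

/-- Interior of the tile `T(k,l)` of the `a×b` grid. -/
noncomputable def tileInt (a b : ℝ) (k l : ℤ) : Set (ℝ × ℝ) :=
  Set.Ioo ((k : ℝ) * a) (((k : ℝ) + 1) * a) ×ˢ Set.Ioo ((l : ℝ) * b) (((l : ℝ) + 1) * b)

/-- Number of tiles of the `a×b` grid visited by the closed segment with endpoints `p`, `q`. -/
noncomputable def visitCount (a b : ℝ) (p q : ℝ × ℝ) : ℕ :=
  Set.ncard {kl : ℤ × ℤ | (segment ℝ p q ∩ tileInt a b kl.1 kl.2).Nonempty}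

/-- Normalized width of the discrete bounding rectangle of the segment with endpoints `p`, `q`. -/
noncomputable def normWidth (a : ℝ) (p q : ℝ × ℝ) : ℤ :=
  ⌈max p.1 q.1 / a⌉ - ⌊min p.1 q.1 / a⌋

/-- Normalized height of the discrete bounding rectangle of the segment with endpoints `p`, `q`. -/
noncomputable def normHeight (b : ℝ) (p q : ℝ × ℝ) : ℤ :=
  ⌈max p.2 q.2 / b⌉ - ⌊min p.2 q.2 / b⌋

/-- Euclidean length of the segment with endpoints `p`, `q`. -/
noncomputable def segLen (p q : ℝ × ℝ) : ℝ :=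
  Real.sqrt ((p.1 - q.1) ^ 2 + (p.2 - q.2) ^ 2)

/-- `maxTiles a b ℓ` : maximum number of tiles of the `a×b` grid visited by a segment of length `ℓ`. -/
noncomputable def maxTiles (a b ℓ : ℝ) : ℕ :=
  sSup {n : ℕ | ∃ p q : ℝ × ℝ, segLen p q = ℓ ∧ visitCount a b p q = n}

/-- `infLen a b N` : infimum of lengths of segments visiting at least `N` tiles of the `a×b` grid. -/
noncomputable def infLen (a b : ℝ) (N : ℕ) : ℝ :=
  sInf {ℓ : ℝ | 0 < ℓ ∧ ∃ p q : ℝ × ℝ, segLen p q = ℓ ∧ N ≤ visitCount a b p q}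

/-- `minIntLen N` : minimum positive integer length of a segment visiting at least `N` tiles
of the unit square grid. -/
noncomputable def minIntLen (N : ℕ) : ℕ :=
  sInf {L : ℕ | 1 ≤ L ∧ ∃ p q : ℝ × ℝ, segLen p q = (L : ℝ) ∧ N ≤ visitCount 1 1 p q}

open MeasureTheory

/-- Uniform probability measure on `Ω = [0,a) × [0,b) × [0,2π)`. -/
noncomputable def unifP (a b : ℝ) : Measure (ℝ × ℝ × ℝ) :=
  (ENNReal.ofReal (2 * Real.pi * a * b))⁻¹ •
    (volume.restrict (Set.Ico (0:ℝ) a ×ˢ Set.Ico (0:ℝ) b ×ˢ Set.Ico (0:ℝ) (2 * Real.pi)))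

/-- First endpoint of the random segment determined by `ω = (x₁, y₁, θ)`. -/
noncomputable def segPt1 (ω : ℝ × ℝ × ℝ) : ℝ × ℝ := (ω.1, ω.2.1)

/-- Second endpoint of the random segment of length `ℓ` determined by `ω = (x₁, y₁, θ)`. -/
noncomputable def segPt2 (ℓ : ℝ) (ω : ℝ × ℝ × ℝ) : ℝ × ℝ :=
  (ω.1 + ℓ * Real.cos ω.2.2, ω.2.1 + ℓ * Real.sin ω.2.2)

/-- The function `f(z) = z·arccos z − √(1−z²) + 1`. -/
noncomputable def buffonF (z : ℝ) : ℝ := z * Real.arccos z - Real.sqrt (1 - z ^ 2) + 1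

/-!
Condition on the direction `θ`. The event `n ≤ i` then depends only on `x₁` and on the horizontal
displacement `t = ℓ cos θ`, and for `x₁` uniform in `(0, a)` it is an interval of length
`min a ((|t| - (n - 2) a)⁺)`. Writing this clipped ramp as the difference of the two ramps
`(|t| - (n - 2) a)⁺ - (|t| - (n - 1) a)⁺`, and using the symmetries of `cos` to restrict `θ` to
`[0, π/2]`, everything reduces to `J z = ∫₀^{π/2} (cos θ - z)⁺ dθ` at `z = a (n - 2) / ℓ` and
`z = a (n - 1) / ℓ`. Splitting at `θ = arccos z` gives `J z = 1 - f z` on `[0, 1]`, while `J`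
vanishes on `[1, ∞)` and is affine on `(-∞, 0]`; the four cases of the theorem are the possible
positions of the two arguments.
-/

open Real

lemma min_max_zero_sub_eq {c : ℝ} (hc : 0 ≤ c) (x y : ℝ) :
    min c (max 0 (x - y)) = max 0 (x - y) - max 0 (x - (y + c)) := by
  simp only [max_def, min_def]
  split_ifs <;> linarith

noncomputable def cosExcessIntegral (z : ℝ) : ℝ := ∫ θ in 0..π / 2, max 0 (cos θ - z)

lemma cosExcessIntegral_of_nonpos {z : ℝ} (hz : z ≤ 0) :
    cosExcessIntegral z = 1 - z * π / 2 := by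
  rw [cosExcessIntegral, intervalIntegral.integral_congr (g := fun θ => cos θ - z),
    intervalIntegral.integral_sub (continuous_cos.intervalIntegrable _ _)
      intervalIntegrable_const, integral_cos, intervalIntegral.integral_const]
  · simp
    ring
  · intro θ hθ
    rw [uIcc_of_le (by linarith [pi_pos])] at hθ
    have := cos_nonneg_of_mem_Icc ⟨by linarith [hθ.1, pi_pos], hθ.2⟩
    exact max_eq_right (by linarith)

lemma cosExcessIntegral_eq {z : ℝ} (hz₀ : 0 ≤ z) (hz₁ : z ≤ 1) :
    cosExcessIntegral z = 1 - buffonF z := by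
  have hint (u v : ℝ) : IntervalIntegrable (fun θ => max 0 (cos θ - z)) volume u v :=
    Continuous.intervalIntegrable (by fun_prop) u v
  have hθ₀ : 0 ≤ arccos z := arccos_nonneg z
  have hθ₁ : arccos z ≤ π / 2 := arccos_le_pi_div_two.2 hz₀
  have above : ∫ θ in 0..arccos z, max 0 (cos θ - z) = sin (arccos z) - z * arccos z := by
    rw [intervalIntegral.integral_congr (g := fun θ => cos θ - z),
      intervalIntegral.integral_sub (continuous_cos.intervalIntegrable _ _)
        intervalIntegrable_const, integral_cos, intervalIntegral.integral_const]
    · simp [mul_comm]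
    · intro θ hθ
      rw [uIcc_of_le hθ₀] at hθ
      have : z ≤ cos θ := by
        simpa [cos_arccos (by linarith) hz₁] using
          cos_le_cos_of_nonneg_of_le_pi hθ.1 (arccos_le_pi z) hθ.2
      exact max_eq_right (by linarith)
  have below : ∫ θ in arccos z..π / 2, max 0 (cos θ - z) = 0 := by
    rw [intervalIntegral.integral_congr (g := fun _ => 0), intervalIntegral.integral_zero]
    intro θ hθ
    rw [uIcc_of_le hθ₁] at hθ
    have : cos θ ≤ z := by
      simpa [cos_arccos (by linarith) hz₁] using
        cos_le_cos_of_nonneg_of_le_pi hθ₀ (by linarith [hθ.2, pi_pos]) hθ.1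
    exact max_eq_left (by linarith)
  rw [cosExcessIntegral, ← intervalIntegral.integral_add_adjacent_intervals (hint 0 (arccos z))
    (hint _ _), above, below, sin_arccos, buffonF]
  ring

lemma cosExcessIntegral_eq_zero {z : ℝ} (hz : 1 ≤ z) : cosExcessIntegral z = 0 := by
  rw [cosExcessIntegral, intervalIntegral.integral_congr (g := fun _ => 0),
    intervalIntegral.integral_zero]
  intro θ _
  exact max_eq_left (by linarith [cos_le_one θ])

lemma integral_max_zero_mul_cos_sub {ℓ : ℝ} (hℓ : 0 < ℓ) (s : ℝ) :
    ∫ θ in 0..π / 2, max 0 (ℓ * cos θ - s) = ℓ * cosExcessIntegral (s / ℓ) := by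
  rw [cosExcessIntegral, ← intervalIntegral.integral_const_mul]
  congr 1 with θ
  rw [mul_max_of_nonneg _ _ hℓ.le, mul_zero, mul_sub, mul_div_cancel₀ _ hℓ.ne']

lemma integral_comp_abs_cos_eq_four_mul {K : ℝ → ℝ} (hK : Continuous K) :
    ∫ θ in 0..2 * π, K |cos θ| = 4 * ∫ θ in 0..π / 2, K (cos θ) := by
  have hper : Function.Periodic (fun θ => K |cos θ|) π := fun θ => by
    simp [cos_add_pi, abs_neg]
  have hint (u v : ℝ) : IntervalIntegrable (fun θ => K (cos θ)) volume u v :=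
    (hK.comp continuous_cos).intervalIntegrable u v
  -- `|cos|` agrees with the even function `cos` on the period `[-π/2, π/2]`
  have half_period :
      ∫ θ in -(π / 2)..π / 2, K |cos θ| = 2 * ∫ θ in 0..π / 2, K (cos θ) := by
    rw [intervalIntegral.integral_congr (g := fun θ => K (cos θ)),
      ← intervalIntegral.integral_add_adjacent_intervals (hint _ 0) (hint 0 _), ← neg_zero,
      ← intervalIntegral.integral_comp_neg]
    · simp only [cos_neg, neg_zero]
      ring
    · intro θ hθ
      rw [uIcc_of_le (by linarith [pi_pos])] at hθ
      simp only [abs_of_nonneg (cos_nonneg_of_mem_Icc hθ)]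
  have two_periods := hper.intervalIntegral_add_zsmul_eq 2 0
    (fun u v => (hK.comp (continuous_abs.comp continuous_cos)).intervalIntegrable u v)
  rw [zero_add, hper.intervalIntegral_add_eq 0 (-(π / 2)), show -(π / 2) + π = π / 2 by ring,
    half_period] at two_periods
  rw [show (2 : ℝ) * π = (2 : ℤ) • π by simp, two_periods, zsmul_eq_mul]
  push_cast
  ring

lemma le_normWidth_iff_of_nonneg {a t x y y' : ℝ} (ha : 0 < a) (ht : 0 ≤ t) (hx : x ∈ Ioo 0 a)
    (n : ℤ) : n ≤ normWidth a (x, y) (x + t, y') ↔ (n - 1) * a - t < x := by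
  have hfloor : ⌊x / a⌋ = 0 :=
    Int.floor_eq_zero_iff.2 ⟨div_nonneg hx.1.le ha.le, (div_lt_one ha).2 hx.2⟩
  rw [normWidth, max_eq_right (by linarith), min_eq_left (by linarith), hfloor, sub_zero,
    ← Int.sub_one_lt_iff, Int.lt_ceil, lt_div_iff₀ ha]
  push_cast
  constructor <;> intro h <;> linarith

lemma le_normWidth_iff_of_neg {a t x y y' : ℝ} (ha : 0 < a) (ht : t < 0) (hx : x ∈ Ioo 0 a)
    (n : ℤ) : n ≤ normWidth a (x, y) (x + t, y') ↔ x < (2 - n) * a - t := by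
  have hceil : ⌈x / a⌉ = 1 := by
    rw [Int.ceil_eq_iff]
    push_cast
    exact ⟨by simpa using div_pos hx.1 ha, (div_le_one ha).2 hx.2.le⟩
  rw [normWidth, max_eq_left (by linarith), min_eq_right (by linarith), hceil,
    show n ≤ 1 - ⌊(x + t) / a⌋ ↔ ⌊(x + t) / a⌋ ≤ 1 - n by omega, Int.floor_le_iff,
    div_lt_iff₀ ha]
  push_cast
  constructor <;> intro h <;> linarith

lemma volume_setOf_le_normWidth {a : ℝ} (ha : 0 < a) (n : ℤ) (t y y' : ℝ) :
    volume {x ∈ Ioo 0 a | n ≤ normWidth a (x, y) (x + t, y')} =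
      ENNReal.ofReal (min a (max 0 (|t| - (n - 2) * a))) := by
  have hclip (u : ℝ) : ENNReal.ofReal (min a u) = ENNReal.ofReal (min a (max 0 u)) := by simp
  rcases le_or_gt 0 t with ht | ht
  · have hset : {x ∈ Ioo 0 a | n ≤ normWidth a (x, y) (x + t, y')} =
        Ioo (max 0 ((n - 1) * a - t)) a := by
      ext x
      simp only [mem_ofPred_eq, mem_Ioo, max_lt_iff]
      constructor
      · rintro ⟨hx, hn⟩
        exact ⟨⟨hx.1, (le_normWidth_iff_of_nonneg ha ht hx n).1 hn⟩, hx.2⟩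
      · rintro ⟨⟨hx₀, hu⟩, hxa⟩
        exact ⟨⟨hx₀, hxa⟩, (le_normWidth_iff_of_nonneg ha ht ⟨hx₀, hxa⟩ n).2 hu⟩
    rw [hset, Real.volume_Ioo, abs_of_nonneg ht, ← hclip, ← min_sub_sub_left, sub_zero]
    congr 2
    ring
  · have hset : {x ∈ Ioo 0 a | n ≤ normWidth a (x, y) (x + t, y')} =
        Ioo 0 (min a ((2 - n) * a - t)) := by
      ext x
      simp only [mem_ofPred_eq, mem_Ioo, lt_min_iff]
      constructor
      · rintro ⟨hx, hn⟩
        exact ⟨hx.1, hx.2, (le_normWidth_iff_of_neg ha ht hx n).1 hn⟩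
      · rintro ⟨hx₀, hxa, hv⟩
        exact ⟨⟨hx₀, hxa⟩, (le_normWidth_iff_of_neg ha ht ⟨hx₀, hxa⟩ n).2 hv⟩
    rw [hset, Real.volume_Ioo, abs_of_neg ht, ← hclip, sub_zero]
    congr 2
    ring

lemma unifP_preimage_fst_snd_snd {a b : ℝ} (hb : 0 < b) {D : Set (ℝ × ℝ)}
    (hD : MeasurableSet D) :
    unifP a b ((fun ω : ℝ × ℝ × ℝ => (ω.1, ω.2.2)) ⁻¹' D) =
      (ENNReal.ofReal (2 * π * a))⁻¹ *
        ∫⁻ θ in Ico 0 (2 * π), volume {x ∈ Ico 0 a | (x, θ) ∈ D} := by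
  have hS : MeasurableSet ((fun ω : ℝ × ℝ × ℝ => (ω.1, ω.2.2)) ⁻¹' D) :=
    (measurable_fst.prodMk measurable_snd.snd) hD
  have hslice (x : ℝ) :
      Prod.mk x ⁻¹' ((fun ω : ℝ × ℝ × ℝ => (ω.1, ω.2.2)) ⁻¹' D) = univ ×ˢ (Prod.mk x ⁻¹' D) := by
    ext; simp
  rw [unifP, Measure.smul_apply, smul_eq_mul, Measure.volume_eq_prod ℝ (ℝ × ℝ),
    Measure.volume_eq_prod ℝ ℝ, ← Measure.prod_restrict, ← Measure.prod_restrict,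
    Measure.prod_apply hS]
  simp only [hslice, Measure.prod_prod, Measure.restrict_apply_univ, Real.volume_Ico, sub_zero]
  rw [lintegral_const_mul _ (measurable_measure_prodMk_left hD), ← Measure.prod_apply hD,
    Measure.prod_apply_symm hD, ENNReal.ofReal_mul' hb.le, ENNReal.mul_inv (by simp) (by simp),
    mul_assoc, ← mul_assoc _ (ENNReal.ofReal b),
    ENNReal.inv_mul_cancel (by simpa using hb) (by simp), one_mul]
  congr 1
  refine lintegral_congr fun θ => ?_
  rw [Measure.restrict_apply (measurable_prodMk_right hD), inter_comm]
  rfl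

lemma unifP_le_normWidth_eq_integral {a b : ℝ} (ha : 0 < a) (hb : 0 < b) (ℓ : ℝ) (n : ℤ) :
    unifP a b {ω | n ≤ normWidth a (segPt1 ω) (segPt2 ℓ ω)} =
      ENNReal.ofReal ((2 * π * a)⁻¹ *
        ∫ θ in 0..2 * π, min a (max 0 (|ℓ * cos θ| - (n - 2) * a))) := by
  set D : Set (ℝ × ℝ) := {p | n ≤ normWidth a (p.1, 0) (p.1 + ℓ * cos p.2, 0)}
  have hD : MeasurableSet D :=
    measurableSet_le measurable_const
      ((Measurable.ceil (by fun_prop)).sub (Measurable.floor (by fun_prop)))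
  have hG : Continuous fun θ => min a (max 0 (|ℓ * cos θ| - (n - 2) * a)) := by fun_prop
  have hslices (θ : ℝ) : volume {x ∈ Ico 0 a | (x, θ) ∈ D} =
      ENNReal.ofReal (min a (max 0 (|ℓ * cos θ| - (n - 2) * a))) := by
    rw [← volume_setOf_le_normWidth ha n _ 0 0]
    exact measure_congr (Ioo_ae_eq_Ico.symm.inter (ae_eq_refl _))
  change unifP a b ((fun ω : ℝ × ℝ × ℝ => (ω.1, ω.2.2)) ⁻¹' D) = _
  rw [unifP_preimage_fst_snd_snd hb hD, lintegral_congr hslices,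
    ← ofReal_integral_eq_lintegral_ofReal (hG.integrableOn_Icc.mono_set Ico_subset_Icc_self)
      (Filter.Eventually.of_forall fun θ => le_min ha.le (le_max_left _ _)),
    intervalIntegral.integral_of_le (by positivity), ← integral_Ico_eq_integral_Ioc,
    ENNReal.ofReal_mul (p := (2 * π * a)⁻¹) (by positivity),
    ENNReal.ofReal_inv_of_pos (by positivity)]

lemma unifP_le_normWidth_eq_cosExcessIntegral {a b ℓ : ℝ} (ha : 0 < a) (hb : 0 < b)
    (hℓ : 0 < ℓ) (n : ℤ) :
    unifP a b {ω | n ≤ normWidth a (segPt1 ω) (segPt2 ℓ ω)} =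
      ENNReal.ofReal (2 * ℓ / (π * a) *
        (cosExcessIntegral (a * (n - 2) / ℓ) - cosExcessIntegral (a * (n - 1) / ℓ))) := by
  have hK : Continuous fun c => min a (max 0 (ℓ * c - (n - 2) * a)) := by fun_prop
  have habs (θ : ℝ) : |ℓ * cos θ| = ℓ * |cos θ| := by rw [abs_mul, abs_of_pos hℓ]
  simp only [unifP_le_normWidth_eq_integral ha hb ℓ n, habs]
  rw [integral_comp_abs_cos_eq_four_mul hK]
  simp only [min_max_zero_sub_eq ha.le]
  rw [intervalIntegral.integral_sub (Continuous.intervalIntegrable (by fun_prop) _ _)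
      (Continuous.intervalIntegrable (by fun_prop) _ _),
    integral_max_zero_mul_cos_sub hℓ, integral_max_zero_mul_cos_sub hℓ]
  rw [show (n - 2) * a / ℓ = a * (n - 2) / ℓ by ring,
    show ((n - 2) * a + a) / ℓ = a * (n - 1) / ℓ by ring]
  congr 1
  field_simp
  ring

theorem stmt_18_general (a b ℓ : ℝ) (ha : 0 < a) (hb : 0 < b) (hℓ : 0 < ℓ) (n : ℕ) :
    (n = 1 →
      unifP a b {ω | (n : ℤ) ≤ normWidth a (segPt1 ω) (segPt2 ℓ ω)} = 1) ∧
    (2 ≤ n → (n : ℝ) < ℓ / a + 1 →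
      unifP a b {ω | (n : ℤ) ≤ normWidth a (segPt1 ω) (segPt2 ℓ ω)} =
        ENNReal.ofReal (2 * ℓ / (Real.pi * a) *
          (buffonF (a * ((n : ℝ) - 1) / ℓ) - buffonF (a * ((n : ℝ) - 2) / ℓ)))) ∧
    (ℓ / a + 1 ≤ (n : ℝ) → (n : ℝ) < ℓ / a + 2 →
      unifP a b {ω | (n : ℤ) ≤ normWidth a (segPt1 ω) (segPt2 ℓ ω)} =
        ENNReal.ofReal (2 * ℓ / (Real.pi * a) *
          (1 - buffonF (a * ((n : ℝ) - 2) / ℓ)))) ∧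
    (ℓ / a + 2 ≤ (n : ℝ) →
      unifP a b {ω | (n : ℤ) ≤ normWidth a (segPt1 ω) (segPt2 ℓ ω)} = 0) := by
  have hP := unifP_le_normWidth_eq_cosExcessIntegral ha hb hℓ n
  push_cast at hP
  have nonpos {c : ℝ} (hc : c ≤ 0) : a * c / ℓ ≤ 0 :=
    div_nonpos_of_nonpos_of_nonneg (mul_nonpos_of_nonneg_of_nonpos ha.le hc) hℓ.le
  have nonneg {c : ℝ} (hc : 0 ≤ c) : 0 ≤ a * c / ℓ := by positivity
  have le_one {c : ℝ} (hc : c ≤ ℓ / a) : a * c / ℓ ≤ 1 :=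
    (div_le_one hℓ).2 ((le_div_iff₀' ha).1 hc)
  have one_le {c : ℝ} (hc : ℓ / a ≤ c) : 1 ≤ a * c / ℓ :=
    (one_le_div hℓ).2 ((div_le_iff₀' ha).1 hc)
  refine ⟨fun h1 => ?_, fun h2 hlt => ?_, fun hge hlt => ?_, fun hge => ?_⟩
  · subst h1
    rw [hP, cosExcessIntegral_of_nonpos (nonpos (by norm_num)),
      cosExcessIntegral_of_nonpos (nonpos (by norm_num)), ← ENNReal.ofReal_one]
    congr 1
    field_simp
    ring
  · have h2 : (2 : ℝ) ≤ n := by exact_mod_cast h2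
    rw [hP, cosExcessIntegral_eq (nonneg (by linarith)) (le_one (by linarith)),
      cosExcessIntegral_eq (nonneg (by linarith)) (le_one (by linarith))]
    congr 1
    ring
  · have h2 : (2 : ℝ) ≤ n := by
      have h1 : 1 < n := by exact_mod_cast (by linarith [div_pos hℓ ha] : (1 : ℝ) < n)
      exact_mod_cast h1
    rw [hP, cosExcessIntegral_eq (nonneg (by linarith)) (le_one (by linarith)),
      cosExcessIntegral_eq_zero (one_le (by linarith)), sub_zero]
  · rw [hP, cosExcessIntegral_eq_zero (one_le (by linarith)),
      cosExcessIntegral_eq_zero (one_le (by linarith)), sub_self, mul_zero, ENNReal.ofReal_zero]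

theorem stmt_18 (a b ℓ : ℝ) (ha : 0 < a) (hb : 0 < b) (hℓ : 0 < ℓ) (n : ℕ) (hn : 1 ≤ n) :
    (n = 1 →
      unifP a b {ω | (n : ℤ) ≤ normWidth a (segPt1 ω) (segPt2 ℓ ω)} = 1) ∧
    (2 ≤ n → (n : ℝ) < ℓ / a + 1 →
      unifP a b {ω | (n : ℤ) ≤ normWidth a (segPt1 ω) (segPt2 ℓ ω)} =
        ENNReal.ofReal (2 * ℓ / (Real.pi * a) *
          (buffonF (a * ((n : ℝ) - 1) / ℓ) - buffonF (a * ((n : ℝ) - 2) / ℓ)))) ∧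
    (ℓ / a + 1 ≤ (n : ℝ) → (n : ℝ) < ℓ / a + 2 →
      unifP a b {ω | (n : ℤ) ≤ normWidth a (segPt1 ω) (segPt2 ℓ ω)} =
        ENNReal.ofReal (2 * ℓ / (Real.pi * a) *
          (1 - buffonF (a * ((n : ℝ) - 2) / ℓ)))) ∧
    (ℓ / a + 2 ≤ (n : ℝ) →
      unifP a b {ω | (n : ℤ) ≤ normWidth a (segPt1 ω) (segPt2 ℓ ω)} = 0) :=
  stmt_18_general a b ℓ ha hb hℓ n
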